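/- Let 0 < p, q < 1 with q + 2p < 1, and suppose a_{m,t} ≤ 1 − m^{-q} for all m and all 1 ≤ t ≤ m. For ζ = (ζ_1,…,ζ_m) ∈ [0,1]^m define the log-likelihood ratio L_m(ζ) = Σ_{t=1}^m log(1 + ε_m(g_{m,t}(ζ_t) − 1)), where g_{m,t}(y) = a_{m,t}^{-1}·1{y ≤ a_{m,t}} is the density of U[0,a_{m,t}]. Then the likelihood ratio test that rejects the null hypothesis if and only if L_m ≥ 0 is reliable: P0_m(L_m ≥ 0) → 0 and P1_m(L_m < 0) → 0 as m → ∞. (Theorem 3.2, part 1: consistency of the likelihood ratio test.) -/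

import Mathlib

/-!
Both error probabilities are Chernoff bounds with exponent `1/2`:
`P0(L ≥ 0) ≤ E0[exp (L/2)]` and `P1(L < 0) ≤ E1[exp (-L/2)]`. By independence of the
coordinates each expectation factors, and both factor into the same product of Hellinger
affinities `ρ_t = a_t √(1 - ε + ε/a_t) + (1 - a_t) √(1 - ε)` of `U[0,1]` and the `t`-th mixture.
Since the likelihood ratio has `U[0,1]`-mean one and `a_t ≤ 1 - δ` with `δ = m^{-q}`,
`ρ_t ≤ 1 - δ ε²/8`, so both errors are at most `exp (-m δ ε²/8) = exp (-m^{1-q-2p}/8) → 0`.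
-/

open MeasureTheory Filter

/-- The uniform distribution on `[0, a]` (for `a > 0`). -/
noncomputable def unif (a : ℝ) : Measure ℝ :=
  (ENNReal.ofReal a)⁻¹ • volume.restrict (Set.Icc 0 a)

/-- The mixture `(1 - ε)·U[0,1] + ε·U[0,a]`. -/
noncomputable def mix (ε a : ℝ) : Measure ℝ :=
  ENNReal.ofReal (1 - ε) • unif 1 + ENNReal.ofReal ε • unif a

/-- The null law `P0_m`: `m` i.i.d. uniform-`[0,1]` coordinates. -/
noncomputable def nullLaw (m : ℕ) : Measure (Fin m → ℝ) :=
  Measure.pi fun _ => unif 1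

/-- The alternative law `P1_m`: independent coordinates, the `t`-th distributed as
`(1 - ε)·U[0,1] + ε·U[0, a t]`. -/
noncomputable def altLaw (m : ℕ) (ε : ℝ) (a : Fin m → ℝ) : Measure (Fin m → ℝ) :=
  Measure.pi fun t => mix ε (a t)

/-- The log-likelihood ratio `L_m(ζ) = ∑_t log (1 + ε (g_t(ζ_t) - 1))`, where
`g_t(y) = (a t)⁻¹ · 1{y ≤ a t}` is the density of `U[0, a t]`. -/
noncomputable def LLR (m : ℕ) (ε : ℝ) (a : Fin m → ℝ) (ζ : Fin m → ℝ) : ℝ :=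
  ∑ t, Real.log (1 + ε * ((if ζ t ≤ a t then (a t)⁻¹ else 0) - 1))

open Real
open scoped ENNReal

section Chernoff

variable {ι : Type*} [Fintype ι] {Ω : ι → Type*} [∀ i, MeasurableSpace (Ω i)]
  (μ : ∀ i, Measure (Ω i)) [∀ i, IsProbabilityMeasure (μ i)]

theorem lintegral_pi_prod_eq_prod_lintegral (f : ∀ i, Ω i → ℝ≥0∞) (hf : ∀ i, Measurable (f i)) :
    ∫⁻ x, ∏ i, f i (x i) ∂Measure.pi μ = ∏ i, ∫⁻ y, f i y ∂μ i := by
  rw [ProbabilityTheory.lintegral_prod_eq_prod_lintegral_of_indepFun _ _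
    (ProbabilityTheory.iIndepFun_pi fun i => (hf i).aemeasurable)
    fun i => (hf i).comp (measurable_pi_apply i)]
  exact Finset.prod_congr rfl fun i _ =>
    (measurePreserving_eval μ i).lintegral_comp (hf i)

theorem measure_pi_sum_nonneg_le_prod_lintegral_exp (f : ∀ i, Ω i → ℝ)
    (hf : ∀ i, Measurable (f i)) {s : ℝ} (hs : 0 ≤ s) :
    Measure.pi μ {x | 0 ≤ ∑ i, f i (x i)}
      ≤ ∏ i, ∫⁻ y, ENNReal.ofReal (exp (s * f i y)) ∂μ i := by
  have hF : ∀ i, Measurable fun y => ENNReal.ofReal (exp (s * f i y)) := fun i =>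
    ENNReal.measurable_ofReal.comp (measurable_exp.comp ((hf i).const_mul s))
  rw [← lintegral_pi_prod_eq_prod_lintegral μ _ hF]
  refine meas_le_lintegral₀ (Finset.measurable_prod _ fun i _ =>
    (hF i).comp (measurable_pi_apply i)).aemeasurable fun x hx => ?_
  change 1 ≤ ∏ i, ENNReal.ofReal (exp (s * f i (x i)))
  rw [← ENNReal.ofReal_prod_of_nonneg fun i _ => (exp_pos _).le, ← exp_sum, ← Finset.mul_sum]
  exact ENNReal.one_le_ofReal.mpr (one_le_exp (mul_nonneg hs hx))

end Chernoff

section Uniform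

variable {a : ℝ}

theorem unif_one : unif 1 = volume.restrict (Set.Icc 0 1) := by
  simp [unif]

theorem isProbabilityMeasure_unif (ha : 0 < a) : IsProbabilityMeasure (unif a) := by
  constructor
  rw [unif, Measure.smul_apply, Measure.restrict_apply_univ, Real.volume_Icc, sub_zero,
    smul_eq_mul, ENNReal.inv_mul_cancel (by simpa using ha) ENNReal.ofReal_ne_top]

theorem isProbabilityMeasure_mix {ε : ℝ} (hε0 : 0 ≤ ε) (hε1 : ε ≤ 1) (ha : 0 < a) :
    IsProbabilityMeasure (mix ε a) := by
  have := isProbabilityMeasure_unif one_pos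
  have := isProbabilityMeasure_unif ha
  constructor
  rw [mix, Measure.add_apply, Measure.smul_apply, Measure.smul_apply, measure_univ, measure_univ,
    smul_eq_mul, smul_eq_mul, mul_one, mul_one, ← ENNReal.ofReal_add (by linarith) hε0]
  simp

variable {A B : ℝ}

theorem lintegral_unif_ite (ha : 0 < a) :
    ∫⁻ y, ENNReal.ofReal (if y ≤ a then A else B) ∂unif a = ENNReal.ofReal A := by
  rw [unif, lintegral_smul_measure, setLIntegral_congr_fun measurableSet_Icc fun y hy => by
      rw [if_pos hy.2], setLIntegral_const, Real.volume_Icc, sub_zero, smul_eq_mul,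
    mul_left_comm, ENNReal.inv_mul_cancel (by simpa using ha) ENNReal.ofReal_ne_top, mul_one]

theorem lintegral_unif_one_ite (ha0 : 0 ≤ a) (ha1 : a ≤ 1) (hA : 0 ≤ A) (hB : 0 ≤ B) :
    ∫⁻ y, ENNReal.ofReal (if y ≤ a then A else B) ∂unif 1
      = ENNReal.ofReal (a * A + (1 - a) * B) := by
  have hdisj : Disjoint (Set.Icc 0 a) (Set.Ioc a 1) :=
    Set.disjoint_left.mpr fun y hy hy' => hy'.1.not_ge hy.2
  rw [unif_one, ← Set.Icc_union_Ioc_eq_Icc ha0 ha1,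
    Measure.restrict_union hdisj measurableSet_Ioc, lintegral_add_measure,
    setLIntegral_congr_fun measurableSet_Icc fun y hy => by rw [if_pos hy.2],
    setLIntegral_congr_fun measurableSet_Ioc fun y hy => by rw [if_neg hy.1.not_ge],
    setLIntegral_const, setLIntegral_const, Real.volume_Icc, Real.volume_Ioc, sub_zero,
    ← ENNReal.ofReal_mul hA, ← ENNReal.ofReal_mul hB,
    ← ENNReal.ofReal_add (by positivity) (mul_nonneg hB (by linarith))]
  ring_nf

theorem lintegral_mix_ite {ε : ℝ} (hε0 : 0 ≤ ε) (hε1 : ε ≤ 1) (ha0 : 0 < a) (ha1 : a ≤ 1)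
    (hA : 0 ≤ A) (hB : 0 ≤ B) :
    ∫⁻ y, ENNReal.ofReal (if y ≤ a then A else B) ∂mix ε a
      = ENNReal.ofReal ((1 - ε) * (a * A + (1 - a) * B) + ε * A) := by
  have haA : 0 ≤ a * A + (1 - a) * B := by nlinarith
  rw [mix, lintegral_add_measure, lintegral_smul_measure, lintegral_smul_measure,
    lintegral_unif_one_ite ha0.le ha1 hA hB, lintegral_unif_ite ha0, smul_eq_mul, smul_eq_mul,
    ← ENNReal.ofReal_mul (by linarith), ← ENNReal.ofReal_mul hε0,
    ← ENNReal.ofReal_add (mul_nonneg (by linarith) haA) (mul_nonneg hε0 hA)]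

end Uniform

theorem exp_half_mul_log {x : ℝ} (hx : 0 < x) : exp (1 / 2 * log x) = √x := by
  rw [sqrt_eq_rpow, rpow_def_of_pos hx, mul_comm]

section LikelihoodRatio

variable {ε a : ℝ}

noncomputable def likelihoodRatio (ε a y : ℝ) : ℝ :=
  1 + ε * ((if y ≤ a then a⁻¹ else 0) - 1)

theorem likelihoodRatio_eq_ite (y : ℝ) :
    likelihoodRatio ε a y = if y ≤ a then 1 - ε + ε / a else 1 - ε := by
  unfold likelihoodRatio; split_ifs <;> ring

theorem measurable_likelihoodRatio : Measurable (likelihoodRatio ε a) :=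
  measurable_const.add (measurable_const.mul ((Measurable.ite measurableSet_Iic measurable_const
    measurable_const).sub measurable_const))

theorem one_sub_add_div_pos (hε0 : 0 ≤ ε) (hε1 : ε < 1) (ha : 0 < a) : 0 < 1 - ε + ε / a := by
  have := div_nonneg hε0 ha.le
  linarith

noncomputable def hellingerAffinity (ε a : ℝ) : ℝ :=
  a * √(1 - ε + ε / a) + (1 - a) * √(1 - ε)

theorem lintegral_unif_one_exp_half_log_likelihoodRatio (hε0 : 0 ≤ ε) (hε1 : ε < 1)
    (ha0 : 0 < a) (ha1 : a ≤ 1) :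
    ∫⁻ y, ENNReal.ofReal (exp (1 / 2 * log (likelihoodRatio ε a y))) ∂unif 1
      = ENNReal.ofReal (hellingerAffinity ε a) := by
  have hhi := one_sub_add_div_pos hε0 hε1 ha0
  simp_rw [likelihoodRatio_eq_ite, apply_ite (fun x => exp (1 / 2 * log x)),
    exp_half_mul_log hhi, exp_half_mul_log (sub_pos.mpr hε1)]
  exact lintegral_unif_one_ite ha0.le ha1 (sqrt_nonneg _) (sqrt_nonneg _)

theorem lintegral_mix_exp_neg_half_log_likelihoodRatio (hε0 : 0 ≤ ε) (hε1 : ε < 1)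
    (ha0 : 0 < a) (ha1 : a ≤ 1) :
    ∫⁻ y, ENNReal.ofReal (exp (1 / 2 * -log (likelihoodRatio ε a y))) ∂mix ε a
      = ENNReal.ofReal (hellingerAffinity ε a) := by
  have hhi := one_sub_add_div_pos hε0 hε1 ha0
  have hlo : 0 < 1 - ε := sub_pos.mpr hε1
  simp_rw [likelihoodRatio_eq_ite, apply_ite (fun x => exp (1 / 2 * -log x)), mul_neg, exp_neg,
    exp_half_mul_log hhi, exp_half_mul_log hlo]
  rw [lintegral_mix_ite hε0 hε1.le ha0 ha1 (inv_nonneg.mpr (sqrt_nonneg _))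
    (inv_nonneg.mpr (sqrt_nonneg _)), hellingerAffinity]
  set B := √(1 - ε + ε / a)
  set u := √(1 - ε)
  have hB : 0 < B := sqrt_pos.mpr hhi
  have hu : 0 < u := sqrt_pos.mpr hlo
  have hmassB : a * B ^ 2 = a * (1 - ε) + ε := by rw [sq_sqrt hhi.le]; field_simp
  have hu2 : u ^ 2 = 1 - ε := sq_sqrt hlo.le
  congr 1
  field_simp
  linear_combination (-u) * hmassB - (1 - a) * B * hu2

theorem hellingerAffinity_le_exp {δ : ℝ} (hε0 : 0 ≤ ε) (hε1 : ε < 1) (hδ : 0 ≤ δ) (ha0 : 0 < a)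
    (ha1 : a ≤ 1 - δ) : hellingerAffinity ε a ≤ exp (-(δ * ε ^ 2 / 8)) := by
  have hhi := one_sub_add_div_pos hε0 hε1 ha0
  set B := √(1 - ε + ε / a)
  set u := √(1 - ε)
  have hu0 : 0 ≤ u := sqrt_nonneg _
  have hB2 : B ^ 2 = 1 - ε + ε / a := sq_sqrt hhi.le
  have hu2 : u ^ 2 = 1 - ε := sq_sqrt (by linarith)
  have hmass : a * B ^ 2 + (1 - a) * u ^ 2 = 1 := by
    rw [hu2, hB2]; field_simp; ring
  have hu_le : u ≤ 1 - ε / 2 := by nlinarith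
  have hgap : δ * (ε / 2) ^ 2 ≤ (1 - a) * (1 - u) ^ 2 :=
    mul_le_mul (by linarith) (pow_le_pow_left₀ (by positivity) (by linarith) 2) (by positivity)
      (by linarith)
  -- by `hmass`, `1 - ρ = (a (1 - B)² + (1 - a) (1 - u)²) / 2`
  have hρ : hellingerAffinity ε a ≤ 1 - δ * ε ^ 2 / 8 := by
    unfold hellingerAffinity
    nlinarith [mul_nonneg ha0.le (sq_nonneg (1 - B))]
  linarith [add_one_le_exp (-(δ * ε ^ 2 / 8))]

theorem prod_hellingerAffinity_le {m : ℕ} {a : Fin m → ℝ} {δ : ℝ} (hε0 : 0 ≤ ε) (hε1 : ε < 1)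
    (hδ : 0 ≤ δ) (ha0 : ∀ t, 0 < a t) (ha1 : ∀ t, a t ≤ 1 - δ) :
    ∏ t, ENNReal.ofReal (hellingerAffinity ε (a t))
      ≤ ENNReal.ofReal (exp (-(m * (δ * ε ^ 2 / 8)))) :=
  calc ∏ t, ENNReal.ofReal (hellingerAffinity ε (a t))
      ≤ ∏ _t : Fin m, ENNReal.ofReal (exp (-(δ * ε ^ 2 / 8))) :=
        Finset.prod_le_prod' fun t _ =>
          ENNReal.ofReal_le_ofReal (hellingerAffinity_le_exp hε0 hε1 hδ (ha0 t) (ha1 t))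
    _ = ENNReal.ofReal (exp (-(m * (δ * ε ^ 2 / 8)))) := by
        rw [Finset.prod_const, Finset.card_univ, Fintype.card_fin,
          ← ENNReal.ofReal_pow (exp_pos _).le, ← exp_nat_mul, mul_neg]

end LikelihoodRatio

section Errors

variable {m : ℕ} {ε δ : ℝ} {a : Fin m → ℝ}

theorem nullLaw_LLR_nonneg_le (hε0 : 0 ≤ ε) (hε1 : ε < 1) (hδ : 0 ≤ δ) (ha0 : ∀ t, 0 < a t)
    (ha1 : ∀ t, a t ≤ 1 - δ) :
    nullLaw m {ζ | 0 ≤ LLR m ε a ζ} ≤ ENNReal.ofReal (exp (-(m * (δ * ε ^ 2 / 8)))) := by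
  have := isProbabilityMeasure_unif one_pos
  calc nullLaw m {ζ | 0 ≤ LLR m ε a ζ}
      ≤ ∏ t, ∫⁻ y, ENNReal.ofReal (exp (1 / 2 * log (likelihoodRatio ε (a t) y))) ∂unif 1 :=
        measure_pi_sum_nonneg_le_prod_lintegral_exp _ _
          (fun _ => measurable_likelihoodRatio.log) (by norm_num)
    _ = ∏ t, ENNReal.ofReal (hellingerAffinity ε (a t)) :=
        Finset.prod_congr rfl fun t _ => lintegral_unif_one_exp_half_log_likelihoodRatio hε0 hε1
          (ha0 t) (by linarith [ha1 t])
    _ ≤ _ := prod_hellingerAffinity_le hε0 hε1 hδ ha0 ha1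

theorem altLaw_LLR_neg_le (hε0 : 0 ≤ ε) (hε1 : ε < 1) (hδ : 0 ≤ δ) (ha0 : ∀ t, 0 < a t)
    (ha1 : ∀ t, a t ≤ 1 - δ) :
    altLaw m ε a {ζ | LLR m ε a ζ < 0} ≤ ENNReal.ofReal (exp (-(m * (δ * ε ^ 2 / 8)))) := by
  have := fun t => isProbabilityMeasure_mix hε0 hε1.le (ha0 t)
  calc altLaw m ε a {ζ | LLR m ε a ζ < 0}
      ≤ altLaw m ε a {ζ | 0 ≤ ∑ t, -log (likelihoodRatio ε (a t) (ζ t))} :=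
        measure_mono fun ζ (hζ : LLR m ε a ζ < 0) =>
          show 0 ≤ ∑ t, -log (likelihoodRatio ε (a t) (ζ t)) by
            rw [Finset.sum_neg_distrib]; exact neg_nonneg.mpr hζ.le
    _ ≤ ∏ t, ∫⁻ y, ENNReal.ofReal (exp (1 / 2 * -log (likelihoodRatio ε (a t) y)))
          ∂mix ε (a t) :=
        measure_pi_sum_nonneg_le_prod_lintegral_exp _ _
          (fun _ => measurable_likelihoodRatio.log.neg) (by norm_num)
    _ = ∏ t, ENNReal.ofReal (hellingerAffinity ε (a t)) :=
        Finset.prod_congr rfl fun t _ => lintegral_mix_exp_neg_half_log_likelihoodRatio hε0 hε1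
          (ha0 t) (by linarith [ha1 t])
    _ ≤ _ := prod_hellingerAffinity_le hε0 hε1 hδ ha0 ha1

end Errors

theorem tendsto_exp_neg_natCast_mul_rpow {p q : ℝ} (hpq : q + 2 * p < 1) :
    Tendsto (fun m : ℕ => exp (-(m * ((m : ℝ) ^ (-q) * ((m : ℝ) ^ (-p)) ^ 2 / 8))))
      atTop (nhds 0) := by
  have hrate : ∀ m : ℕ, 0 < m →
      (m : ℝ) * ((m : ℝ) ^ (-q) * ((m : ℝ) ^ (-p)) ^ 2 / 8) = (m : ℝ) ^ (1 - q - 2 * p) / 8 := by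
    intro m hm
    have hm : (0 : ℝ) < m := Nat.cast_pos.mpr hm
    rw [← rpow_natCast, ← rpow_mul hm.le, sub_sub, sub_eq_add_neg, rpow_add hm, rpow_one,
      neg_add, rpow_add hm]
    push_cast
    ring_nf
  refine tendsto_exp_atBot.comp (tendsto_neg_atTop_atBot.comp ?_)
  refine Tendsto.congr' (eventually_gt_atTop 0 |>.mono fun m hm => (hrate m hm).symm) ?_
  exact ((tendsto_rpow_atTop (by linarith)).comp tendsto_natCast_atTop_atTop).atTop_div_const
    (by norm_num)

theorem LRT_consistent_general (p q : ℝ) (hp0 : 0 < p)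
    (hpq : q + 2 * p < 1)
    (a : (m : ℕ) → Fin m → ℝ)
    (ha0 : ∀ m, 2 ≤ m → ∀ t, 0 < a m t)
    (ha1 : ∀ m : ℕ, 2 ≤ m → ∀ t, a m t ≤ 1 - (m : ℝ) ^ (-q)) :
    Tendsto
      (fun m => (nullLaw m {ζ | 0 ≤ LLR m ((m : ℝ) ^ (-p)) (a m) ζ}).toReal)
      atTop (nhds 0)
    ∧ Tendsto
      (fun m => (altLaw m ((m : ℝ) ^ (-p)) (a m)
        {ζ | LLR m ((m : ℝ) ^ (-p)) (a m) ζ < 0}).toReal)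
      atTop (nhds 0) := by
  have hε : ∀ m : ℕ, 2 ≤ m → 0 ≤ (m : ℝ) ^ (-p) ∧ (m : ℝ) ^ (-p) < 1 := fun m hm =>
    ⟨rpow_nonneg m.cast_nonneg _,
      rpow_lt_one_of_one_lt_of_neg (by exact_mod_cast hm) (neg_neg_of_pos hp0)⟩
  have hδ : ∀ m : ℕ, 0 ≤ (m : ℝ) ^ (-q) := fun m => rpow_nonneg m.cast_nonneg _
  have squeeze {P : ℕ → ℝ≥0∞} (hP : ∀ m, 2 ≤ m → P m ≤ ENNReal.ofReal
      (exp (-(m * ((m : ℝ) ^ (-q) * ((m : ℝ) ^ (-p)) ^ 2 / 8))))) :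
      Tendsto (fun m => (P m).toReal) atTop (nhds 0) :=
    squeeze_zero' (.of_forall fun _ => ENNReal.toReal_nonneg)
      ((eventually_ge_atTop 2).mono fun m hm => ENNReal.toReal_le_of_le_ofReal (exp_pos _).le
        (hP m hm))
      (tendsto_exp_neg_natCast_mul_rpow hpq)
  exact ⟨squeeze fun m hm => nullLaw_LLR_nonneg_le (hε m hm).1 (hε m hm).2 (hδ m) (ha0 m hm)
      (ha1 m hm),
    squeeze fun m hm => altLaw_LLR_neg_le (hε m hm).1 (hε m hm).2 (hδ m) (ha0 m hm) (ha1 m hm)⟩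

/-- **Theorem 3.2, part 1 (consistency of the likelihood ratio test).** Let `0 < p, q < 1`
with `q + 2p < 1`, `ε_m = m^{-p}`, and `a m t ∈ (0,1]` with `a m t ≤ 1 - m^{-q}` for all
`m ≥ 2`, `1 ≤ t ≤ m`.  Then the likelihood ratio test rejecting iff `L_m ≥ 0` is reliable:
`P0_m(L_m ≥ 0) → 0` and `P1_m(L_m < 0) → 0` as `m → ∞`. -/
theorem LRT_consistent (p q : ℝ) (hp0 : 0 < p) (hp1 : p < 1)
    (hq0 : 0 < q) (hq1 : q < 1) (hpq : q + 2 * p < 1)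
    (a : (m : ℕ) → Fin m → ℝ)
    (ha0 : ∀ m, 2 ≤ m → ∀ t, 0 < a m t)
    (ha1 : ∀ m : ℕ, 2 ≤ m → ∀ t, a m t ≤ 1 - (m : ℝ) ^ (-q)) :
    Tendsto
      (fun m => (nullLaw m {ζ | 0 ≤ LLR m ((m : ℝ) ^ (-p)) (a m) ζ}).toReal)
      atTop (nhds 0)
    ∧ Tendsto
      (fun m => (altLaw m ((m : ℝ) ^ (-p)) (a m)
        {ζ | LLR m ((m : ℝ) ^ (-p)) (a m) ζ < 0}).toReal)
      atTop (nhds 0) :=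
  LRT_consistent_general p q hp0 hpq a ha0 ha1
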